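/- arXiv:1005.5295 — 4 statements merged into one kernel-verified Lean document; each statement's English description precedes it below -/
import Mathlib

section
/- Let ψ and φ be n-qubit pure states such that ψ i ≠ 0 and φ i ≠ 0 for every bit string i. Then there exist phases α₀, α₁, …, α_n ∈ ℝ with ψ = e^{iα₀} (⊗_k Z(α_k)) φ if and only if: (i) |ψ i| = |φ i| for every bit string i, and (ii) for every qubit position m and all bit strings k, l on the remaining n−1 positions, ψ(0_m k) · ψ(1_m l) · φ(1_m k) · φ(0_m l) = ψ(1_m k) · ψ(0_m l) · φ(0_m k) · φ(1_m l), where 0_m k (resp. 1_m k) denotes the n-bit string with bit 0 (resp. 1) in position m and agreeing with k elsewhere. -/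
open Complex Finset

theorem phase_equiv_iff_amplitudes_and_quadruples {n : ℕ} (ψ φ : (Fin n → Fin 2) → ℂ)
    (hψ : ∀ i : Fin n → Fin 2, ψ i ≠ 0) (hφ : ∀ i : Fin n → Fin 2, φ i ≠ 0) :
    (∃ (α₀ : ℝ) (α : Fin n → ℝ), ∀ i : Fin n → Fin 2,
        ψ i = Complex.exp (Complex.I * (α₀ + ∑ k, α k * (i k : ℕ))) * φ i) ↔
    ((∀ i : Fin n → Fin 2, ‖ψ i‖ = ‖φ i‖) ∧
      (∀ (m : Fin n) (k l : Fin n → Fin 2),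
        ψ (Function.update k m 0) * ψ (Function.update l m 1) *
          φ (Function.update k m 1) * φ (Function.update l m 0) =
        ψ (Function.update k m 1) * ψ (Function.update l m 0) *
          φ (Function.update k m 0) * φ (Function.update l m 1))) := by
  constructor
  · rintro ⟨α₀, α, h⟩
    constructor
    · intro i
      rw [h i, norm_mul]
      have hc : Complex.I * ((α₀ : ℂ) + ((∑ k, α k * ((i k : ℕ) : ℝ) : ℝ) : ℂ))
          = ((α₀ + ∑ k, α k * ((i k : ℕ) : ℝ) : ℝ) : ℂ) * Complex.I := by
        push_cast; ring
      rw [hc, Complex.norm_exp_ofReal_mul_I, one_mul]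
    · intro m k l
      have hs : ∀ (f : Fin n → Fin 2) (v : Fin 2),
          (∑ j, α j * ((Function.update f m v j : ℕ) : ℝ))
          = α m * ((v : ℕ) : ℝ)
            + ∑ j ∈ Finset.univ.erase m, α j * ((f j : ℕ) : ℝ) := by
        intro f v
        rw [← Finset.add_sum_erase _ _ (Finset.mem_univ m), Function.update_self]
        congr 1
        refine Finset.sum_congr rfl fun j hj => ?_
        rw [Function.update_of_ne (Finset.mem_erase.mp hj).1]
      have key : Complex.exp (Complex.I * ((α₀ : ℂ)
              + ((∑ j, α j * ((Function.update k m 0 j : ℕ) : ℝ) : ℝ) : ℂ)))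
            * Complex.exp (Complex.I * ((α₀ : ℂ)
              + ((∑ j, α j * ((Function.update l m 1 j : ℕ) : ℝ) : ℝ) : ℂ)))
          = Complex.exp (Complex.I * ((α₀ : ℂ)
              + ((∑ j, α j * ((Function.update k m 1 j : ℕ) : ℝ) : ℝ) : ℂ)))
            * Complex.exp (Complex.I * ((α₀ : ℂ)
              + ((∑ j, α j * ((Function.update l m 0 j : ℕ) : ℝ) : ℝ) : ℂ))) := by
        rw [← Complex.exp_add, ← Complex.exp_add]
        congr 1
        rw [hs k 0, hs l 1, hs k 1, hs l 0]
        push_cast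
        ring
      rw [h (Function.update k m 0), h (Function.update l m 1),
        h (Function.update k m 1), h (Function.update l m 0)]
      linear_combination (φ (Function.update k m 1) * φ (Function.update l m 0) *
        φ (Function.update k m 0) * φ (Function.update l m 1)) * key
  · rintro ⟨h1, h2⟩
    set r : (Fin n → Fin 2) → ℂ := fun i => ψ i / φ i with hrdef
    have hrne : ∀ i, r i ≠ 0 := fun i => div_ne_zero (hψ i) (hφ i)
    have hpsi : ∀ i, ψ i = r i * φ i := fun i => (div_mul_cancel₀ (ψ i) (hφ i)).symm
    have hφa : ∀ i, ‖φ i‖ ≠ 0 := fun i => norm_ne_zero_iff.mpr (hφ i)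
    have hrabs : ∀ i, ‖r i‖ = 1 := by
      intro i
      have : ‖r i‖ = ‖ψ i‖ / ‖φ i‖ := norm_div _ _
      rw [this, h1 i]
      exact div_self (hφa i)
    have hq : ∀ (m : Fin n) (k l : Fin n → Fin 2),
        r (Function.update k m 0) * r (Function.update l m 1)
        = r (Function.update k m 1) * r (Function.update l m 0) := by
      intro m k l
      have h := h2 m k l
      rw [hpsi (Function.update k m 0), hpsi (Function.update l m 1),
        hpsi (Function.update k m 1), hpsi (Function.update l m 0)] at h
      have hP : φ (Function.update k m 0) * φ (Function.update l m 1) *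
          φ (Function.update k m 1) * φ (Function.update l m 0) ≠ 0 :=
        mul_ne_zero (mul_ne_zero (mul_ne_zero (hφ _) (hφ _)) (hφ _)) (hφ _)
      apply mul_right_cancel₀ hP
      linear_combination h
    set z0 : Fin n → Fin 2 := fun _ => 0 with hz0
    set c : Fin n → ℂ := fun m => r (Function.update z0 m 1) / r z0 with hc
    have hstep : ∀ (m : Fin n) (k : Fin n → Fin 2),
        r (Function.update k m 1) = c m * r (Function.update k m 0) := by
      intro m k
      have h := hq m k z0
      have hz : Function.update z0 m (0 : Fin 2) = z0 := Function.update_eq_self m z0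
      rw [hz] at h
      have hcm : c m = r (Function.update z0 m 1) / r z0 := rfl
      rw [hcm, div_mul_eq_mul_div, eq_div_iff (hrne z0)]
      linear_combination -h
    have main : ∀ (N : ℕ) (i : Fin n → Fin 2), (∑ k, (i k : ℕ)) = N →
        r i = r z0 * ∏ k, c k ^ (i k : ℕ) := by
      intro N
      induction N using Nat.strong_induction_on with
      | _ N ih =>
        intro i hN
        by_cases h0 : ∀ k, i k = 0
        · have hval : ∀ k, (i k : ℕ) = 0 := fun k => by rw [h0 k]; rfl
          simp only [hval, pow_zero, Finset.prod_const_one, mul_one]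
          exact congrArg r (funext h0)
        · push_neg at h0
          obtain ⟨m, hm⟩ := h0
          have hm1 : i m = 1 := by omega
          have h1val : (i m : ℕ) = 1 := by rw [hm1]; rfl
          set i' : Fin n → Fin 2 := Function.update i m 0 with hi'
          have h0val : (i' m : ℕ) = 0 := by rw [hi', Function.update_self]; rfl
          have hsum : ∀ (f : Fin n → Fin 2), (∑ k, (f k : ℕ))
              = (f m : ℕ) + ∑ k ∈ Finset.univ.erase m, (f k : ℕ) :=
            fun f => (Finset.add_sum_erase _ _ (Finset.mem_univ m)).symm
          have herase : ∀ k ∈ Finset.univ.erase m, (i' k : ℕ) = (i k : ℕ) := by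
            intro k hk
            rw [hi', Function.update_of_ne (Finset.mem_erase.mp hk).1]
          have hNval : (∑ k, (i k : ℕ)) = 1 + ∑ k ∈ Finset.univ.erase m, (i k : ℕ) := by
            rw [hsum i, h1val]
          have hsum' : (∑ k, (i' k : ℕ)) = N - 1 := by
            rw [hsum i', Finset.sum_congr rfl herase, h0val]
            rw [hNval] at hN
            omega
          have hNpos : 1 ≤ N := by
            rw [hNval] at hN
            omega
          have hIH := ih (N - 1) (by omega) i' hsum'
          have hii : Function.update i' m (1 : Fin 2) = i := by
            rw [hi', Function.update_idem, ← hm1, Function.update_eq_self]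
          have hii0 : Function.update i' m (0 : Fin 2) = i' := by
            rw [hi', Function.update_idem]
          have hri : r i = c m * r i' := by
            rw [← hii, hstep m i', hii0]
          have hprod : (∏ k, c k ^ (i k : ℕ)) = c m * ∏ k, c k ^ (i' k : ℕ) := by
            rw [← Finset.mul_prod_erase Finset.univ _ (Finset.mem_univ m),
              ← Finset.mul_prod_erase Finset.univ (fun k => c k ^ (i' k : ℕ))
                (Finset.mem_univ m)]
            rw [h1val, h0val, pow_one, pow_zero, one_mul]
            congr 1
            exact Finset.prod_congr rfl fun k hk => by rw [herase k hk]
          rw [hri, hIH, hprod]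
          ring
    have hcabs : ∀ m, ‖c m‖ = 1 := by
      intro m
      have : ‖c m‖
          = ‖r (Function.update z0 m 1)‖ / ‖r z0‖ := norm_div _ _
      rw [this, hrabs, hrabs]
      norm_num
    refine ⟨(r z0).arg, fun m => (c m).arg, fun i => ?_⟩
    have e0 : Complex.exp (((r z0).arg : ℂ) * Complex.I) = r z0 := by
      have := Complex.norm_mul_exp_arg_mul_I (r z0)
      rwa [hrabs z0, Complex.ofReal_one, one_mul] at this
    have ec : ∀ m, Complex.exp (((c m).arg : ℂ) * Complex.I) = c m := by
      intro m
      have := Complex.norm_mul_exp_arg_mul_I (c m)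
      rwa [hcabs m, Complex.ofReal_one, one_mul] at this
    have hcast : ((∑ k, (c k).arg * ((i k : ℕ) : ℝ) : ℝ) : ℂ)
        = ∑ k, ((c k).arg : ℂ) * ((i k : ℕ) : ℂ) := by
      push_cast; ring
    have hexp : Complex.exp (Complex.I * (((r z0).arg : ℂ)
          + ((∑ k, (c k).arg * ((i k : ℕ) : ℝ) : ℝ) : ℂ)))
        = r z0 * ∏ k, c k ^ (i k : ℕ) := by
      rw [hcast, mul_add, Complex.exp_add, mul_comm Complex.I ((r z0).arg : ℂ), e0,
        Finset.mul_sum, Complex.exp_sum]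
      congr 1
      refine Finset.prod_congr rfl fun k _ => ?_
      have hk1 : Complex.exp (((c k).arg : ℂ) * Complex.I) ^ (i k : ℕ)
          = Complex.exp (Complex.I * (((c k).arg : ℂ) * ((i k : ℕ) : ℂ))) := by
        rw [← Complex.exp_nat_mul]
        congr 1
        ring
      rw [← hk1, ec k]
    have hri := main (∑ k, (i k : ℕ)) i rfl
    have hfin : Complex.exp (Complex.I * (((r z0).arg : ℂ)
        + ((∑ k, (c k).arg * ((i k : ℕ) : ℝ) : ℝ) : ℂ))) = r i := hexp.trans hri.symm
    calc ψ i = r i * φ i := hpsi i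
      _ = Complex.exp (Complex.I * (((r z0).arg : ℂ)
          + ((∑ k, (c k).arg * ((i k : ℕ) : ℝ) : ℝ) : ℂ))) * φ i := by rw [hfin]
end

section
/- Let {ψ_j}_{j=1}^4 and {φ_j}_{j=1}^4 be two orthonormal bases of ℂ²⊗ℂ² each consisting of maximally entangled vectors, i.e. for every j both one-qubit reduced density matrices of ψ_j and of φ_j equal (1/2)·I₂. Then there exist real phases γ₁, γ₂, γ₃, γ₄ and 2×2 unitary matrices U₁, U₂ such that ψ_j = e^{iγ_j} (U₁ ⊗ U₂) φ_j for all j ∈ {1,2,3,4}. -/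
open Complex Matrix Kronecker

/-- Reduced density matrix of the first qubit of a two-qubit vector. -/
noncomputable def rdmA (χ : Fin 2 × Fin 2 → ℂ) : Matrix (Fin 2) (Fin 2) ℂ :=
  Matrix.of fun a b => ∑ c : Fin 2, χ (a, c) * starRingEnd ℂ (χ (b, c))

/-- Reduced density matrix of the second qubit of a two-qubit vector. -/
noncomputable def rdmB (χ : Fin 2 × Fin 2 → ℂ) : Matrix (Fin 2) (Fin 2) ℂ :=
  Matrix.of fun a b => ∑ c : Fin 2, χ (c, a) * starRingEnd ℂ (χ (c, b))

private abbrev M2 := Matrix (Fin 2) (Fin 2) ℂ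

lemma cayley2 (A : M2) : A * A = A.trace • A - A.det • 1 := by
  ext i j
  fin_cases i <;> fin_cases j <;>
    simp [Matrix.mul_apply, Matrix.trace, Matrix.det_fin_two, Fin.sum_univ_succ,
      Matrix.diag, Matrix.one_apply] <;> ring

lemma herm_of (A : M2) (h1 : A * A = 1) (h2 : A * Aᴴ = 1) : Aᴴ = A := by
  calc Aᴴ = (A * A) * Aᴴ := by rw [h1, one_mul]
  _ = A * (A * Aᴴ) := by rw [mul_assoc]
  _ = A := by rw [h2, mul_one]

lemma one_add_one_M2 : (1 : M2) + 1 = (2:ℂ) • 1 := by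
  ext i j; simp [Matrix.one_apply]; split <;> norm_num

lemma anticomm (A B : M2) (hA : A * A = 1) (hB : B * B = 1) (htA : A.trace = 0)
    (htB : B.trace = 0) (htAB : (A * B).trace = 0) : A * B + B * A = 0 := by
  have h := cayley2 (A + B)
  have hexp : (A+B) * (A+B) = A*B + B*A + (2:ℂ) • (1 : M2) := by
    rw [add_mul, mul_add, mul_add, hA, hB, ← one_add_one_M2]; abel
  rw [hexp, Matrix.trace_add, htA, htB, zero_add, zero_smul, zero_sub] at h
  have htr := congrArg Matrix.trace h
  have htBA : (B * A).trace = 0 := by rw [Matrix.trace_mul_comm]; exact htAB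
  simp [Matrix.trace_add, htAB, htBA, Matrix.trace_smul, Matrix.trace_one] at htr
  have hd : (A+B).det = -2 := by linear_combination (1/2 : ℂ) * htr
  rw [hd] at h
  have h2 : A * B + B * A + (2:ℂ) • (1:M2) = 0 + (2:ℂ) • (1:M2) := by
    rw [h, zero_add]; module
  exact add_right_cancel h2

noncomputable def Pz : M2 := !![1, 0; 0, -1]
noncomputable def Px : M2 := !![0, 1; 1, 0]
noncomputable def Py : M2 := !![0, -Complex.I; Complex.I, 0]

lemma star_dot_mulVec (A : M2) (v u : Fin 2 → ℂ) :
    star v ⬝ᵥ (A *ᵥ u) = star (Aᴴ *ᵥ v) ⬝ᵥ u := by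
  rw [Matrix.star_mulVec, Matrix.conjTranspose_conjTranspose, dotProduct_mulVec]

lemma conj_pair (A B : M2) (hA2 : A * A = 1) (hB2 : B * B = 1)
    (hAh : Aᴴ = A) (hBh : Bᴴ = B) (hAB : A * B + B * A = 0) (htA : A.trace = 0) :
    ∃ S : M2, Sᴴ * S = 1 ∧ S * Pz = A * S ∧ S * Px = B * S := by
  have hA1 : (1 : M2) + A ≠ 0 := by
    intro h
    have hA : A = -1 := by
      have h' : A + 1 = 0 := by rw [add_comm]; exact h
      exact eq_neg_of_add_eq_zero_left h'
    have : A.trace = -2 := by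
      rw [hA]; simp [Matrix.trace, Fin.sum_univ_succ, Matrix.diag]
    rw [htA] at this; norm_num at this
  obtain ⟨i0, j0, hij⟩ : ∃ i j, ((1:M2) + A) i j ≠ 0 := by
    by_contra h
    push_neg at h
    exact hA1 (by ext i j; exact h i j)
  set w : Fin 2 → ℂ := fun i => ((1:M2) + A) i j0 with hw
  have hAw : A *ᵥ w = w := by
    funext i
    have : (A * ((1:M2) + A)) i j0 = ((1:M2) + A) i j0 := by
      rw [mul_add, mul_one, hA2]; simp [Matrix.add_apply]; ring
    simpa [Matrix.mulVec, Matrix.mul_apply, dotProduct, hw] using this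
  have hwne : w i0 ≠ 0 := hij
  set nn : ℝ := Complex.normSq (w 0) + Complex.normSq (w 1) with hnn
  have hnnpos : 0 < nn := by
    have h0 : 0 ≤ Complex.normSq (w 0) := Complex.normSq_nonneg _
    have h1 : 0 ≤ Complex.normSq (w 1) := Complex.normSq_nonneg _
    fin_cases i0 <;> simp only [] at hwne <;>
      [(have hpos : 0 < Complex.normSq (w 0) := Complex.normSq_pos.mpr hwne);
       (have hpos : 0 < Complex.normSq (w 1) := Complex.normSq_pos.mpr hwne)] <;>
      rw [hnn] <;> linarith
  set r : ℝ := Real.sqrt nn with hr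
  have hrpos : 0 < r := Real.sqrt_pos.mpr hnnpos
  have hrne : ((r:ℝ):ℂ) ≠ 0 := Complex.ofReal_ne_zero.mpr hrpos.ne'
  have hrr : ((r:ℝ):ℂ) * ((r:ℝ):ℂ) = ((nn:ℝ):ℂ) := by
    rw [← Complex.ofReal_mul]
    exact Complex.ofReal_inj.mpr (by rw [hr]; exact Real.mul_self_sqrt hnnpos.le)
  set v : Fin 2 → ℂ := ((r:ℂ))⁻¹ • w with hv'
  have hAv : A *ᵥ v = v := by rw [hv', Matrix.mulVec_smul, hAw]
  have h11 : star v ⬝ᵥ v = 1 := by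
    rw [hv']
    simp only [dotProduct, Pi.star_apply, Pi.smul_apply, smul_eq_mul,
      Fin.sum_univ_two, star_mul', RCLike.star_def, map_inv₀, Complex.conj_ofReal]
    have c0 := Complex.normSq_eq_conj_mul_self (z := w 0)
    have c1 := Complex.normSq_eq_conj_mul_self (z := w 1)
    have hnnc : ((nn:ℝ):ℂ) = Complex.normSq (w 0) + Complex.normSq (w 1) := by
      rw [hnn]; push_cast; ring
    field_simp
    linear_combination -hrr - hnnc - c0 - c1
  have hBA : B * A = -(A * B) := eq_neg_of_add_eq_zero_right hAB
  have hABn : A * B = -(B * A) := eq_neg_of_add_eq_zero_left hAB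
  have hABv : A *ᵥ (B *ᵥ v) = -(B *ᵥ v) := by
    rw [Matrix.mulVec_mulVec, hABn, Matrix.neg_mulVec, ← Matrix.mulVec_mulVec, hAv]
  have hBBv : B *ᵥ (B *ᵥ v) = v := by
    rw [Matrix.mulVec_mulVec, hB2, Matrix.one_mulVec]
  have h12 : star v ⬝ᵥ (B *ᵥ v) = 0 := by
    have e2 : star v ⬝ᵥ ((A * B) *ᵥ v) = star v ⬝ᵥ (B *ᵥ v) := by
      rw [← Matrix.mulVec_mulVec, star_dot_mulVec A, hAh, hAv]
    have hneg : star v ⬝ᵥ (B *ᵥ v) = -(star v ⬝ᵥ (B *ᵥ v)) := by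
      calc star v ⬝ᵥ (B *ᵥ v) = star v ⬝ᵥ (B *ᵥ (A *ᵥ v)) := by rw [hAv]
      _ = star v ⬝ᵥ ((B * A) *ᵥ v) := by rw [Matrix.mulVec_mulVec]
      _ = star v ⬝ᵥ ((-(A * B)) *ᵥ v) := by rw [hBA]
      _ = -(star v ⬝ᵥ ((A * B) *ᵥ v)) := by rw [Matrix.neg_mulVec, dotProduct_neg]
      _ = -(star v ⬝ᵥ (B *ᵥ v)) := by rw [e2]
    exact add_self_eq_zero.mp (by linear_combination hneg)
  have h22 : star (B *ᵥ v) ⬝ᵥ (B *ᵥ v) = 1 := by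
    calc star (B *ᵥ v) ⬝ᵥ (B *ᵥ v) = star (Bᴴ *ᵥ v) ⬝ᵥ (B *ᵥ v) := by rw [hBh]
    _ = star v ⬝ᵥ (B *ᵥ (B *ᵥ v)) := (star_dot_mulVec B v _).symm
    _ = 1 := by rw [hBBv, h11]
  have e11 : (starRingEnd ℂ) (v 0) * v 0 + (starRingEnd ℂ) (v 1) * v 1 = 1 := by
    simpa [dotProduct, Fin.sum_univ_two] using h11
  have e12 : (starRingEnd ℂ) (v 0) * (B *ᵥ v) 0 + (starRingEnd ℂ) (v 1) * (B *ᵥ v) 1 = 0 := by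
    simpa [dotProduct, Fin.sum_univ_two] using h12
  have e22 : (starRingEnd ℂ) ((B *ᵥ v) 0) * (B *ᵥ v) 0
      + (starRingEnd ℂ) ((B *ᵥ v) 1) * (B *ᵥ v) 1 = 1 := by
    simpa [dotProduct, Fin.sum_univ_two] using h22
  have e21 : (starRingEnd ℂ) ((B *ᵥ v) 0) * v 0 + (starRingEnd ℂ) ((B *ᵥ v) 1) * v 1 = 0 := by
    have := congrArg (starRingEnd ℂ) e12
    simp only [map_add, _root_.map_mul, Complex.conj_conj, map_zero] at this
    linear_combination this
  have hAv0 : A 0 0 * v 0 + A 0 1 * v 1 = v 0 := by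
    simpa [Matrix.mulVec, dotProduct, Fin.sum_univ_two] using congrFun hAv 0
  have hAv1 : A 1 0 * v 0 + A 1 1 * v 1 = v 1 := by
    simpa [Matrix.mulVec, dotProduct, Fin.sum_univ_two] using congrFun hAv 1
  have hABv0 : A 0 0 * (B 0 0 * v 0 + B 0 1 * v 1) + A 0 1 * (B 1 0 * v 0 + B 1 1 * v 1)
      = -(B 0 0 * v 0 + B 0 1 * v 1) := by
    simpa [Matrix.mulVec, dotProduct, Fin.sum_univ_two] using congrFun hABv 0
  have hABv1 : A 1 0 * (B 0 0 * v 0 + B 0 1 * v 1) + A 1 1 * (B 1 0 * v 0 + B 1 1 * v 1)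
      = -(B 1 0 * v 0 + B 1 1 * v 1) := by
    simpa [Matrix.mulVec, dotProduct, Fin.sum_univ_two] using congrFun hABv 1
  have hBBv0 : B 0 0 * (B 0 0 * v 0 + B 0 1 * v 1) + B 0 1 * (B 1 0 * v 0 + B 1 1 * v 1)
      = v 0 := by
    simpa [Matrix.mulVec, dotProduct, Fin.sum_univ_two] using congrFun hBBv 0
  have hBBv1 : B 1 0 * (B 0 0 * v 0 + B 0 1 * v 1) + B 1 1 * (B 1 0 * v 0 + B 1 1 * v 1)
      = v 1 := by
    simpa [Matrix.mulVec, dotProduct, Fin.sum_univ_two] using congrFun hBBv 1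
  refine ⟨Matrix.of (fun i j => if j = 0 then v i else (B *ᵥ v) i), ?_, ?_, ?_⟩
  · ext i j
    fin_cases i <;> fin_cases j <;>
      simp [Matrix.mul_apply, Matrix.conjTranspose_apply, Fin.sum_univ_two,
        Matrix.one_apply]
    · exact e11
    · simpa [Matrix.mulVec, dotProduct, Fin.sum_univ_two] using e12
    · simpa [Matrix.mulVec, dotProduct, Fin.sum_univ_two] using e21
    · simpa [Matrix.mulVec, dotProduct, Fin.sum_univ_two] using e22
  · ext i j
    fin_cases i <;> fin_cases j <;>
      simp [Matrix.mul_apply, Fin.sum_univ_two, Pz, Matrix.mulVec, dotProduct]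
    · linear_combination -hAv0
    · linear_combination -hABv0
    · linear_combination -hAv1
    · linear_combination -hABv1
  · ext i j
    fin_cases i <;> fin_cases j <;>
      simp [Matrix.mul_apply, Fin.sum_univ_two, Px, Matrix.mulVec, dotProduct]
    · linear_combination -hBBv0
    · linear_combination -hBBv1

lemma unit_phase (X : M2) (hXu : X * Xᴴ = 1) (htX : X.trace = 0) :
    ∃ (μ : ℂ) (A : M2), ‖μ‖ = 1 ∧ X = μ • A ∧ A * A = 1 ∧ Aᴴ = A ∧ A.trace = 0 := by
  have hdet : X.det * starRingEnd ℂ (X.det) = 1 := by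
    have := congrArg Matrix.det hXu
    rwa [Matrix.det_mul, Matrix.det_conjTranspose, Matrix.det_one] at this
  have habsdet : ‖X.det‖ = 1 := by
    have h1 : Complex.normSq X.det = 1 := by
      have := Complex.mul_conj X.det
      rw [hdet] at this
      exact_mod_cast this.symm
    have := Complex.sq_norm X.det
    nlinarith [norm_nonneg X.det]
  have hdne : -X.det ≠ 0 := by
    simp only [ne_eq, neg_eq_zero]
    intro h; rw [h] at habsdet; simp at habsdet
  obtain ⟨μ, hμ2⟩ : ∃ μ : ℂ, μ ^ 2 = -X.det := IsAlgClosed.exists_pow_nat_eq (-X.det) zero_lt_two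
  have habsμ : ‖μ‖ = 1 := by
    have h2 : ‖μ‖ ^ 2 = 1 := by
      rw [← norm_pow, hμ2]; simpa using habsdet
    nlinarith [norm_nonneg μ]
  have hμne : μ ≠ 0 := by
    intro h; rw [h] at habsμ; simp at habsμ
  have hc : μ⁻¹ * μ⁻¹ * X.det = -1 := by
    field_simp
    linear_combination hμ2
  have hAA : (μ⁻¹ • X) * (μ⁻¹ • X) = 1 := by
    have h : (μ⁻¹ • X) * (μ⁻¹ • X) = (μ⁻¹ * μ⁻¹) • (X * X) := by
      rw [smul_mul_assoc, mul_smul_comm, smul_smul]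
    rw [h, cayley2, htX, zero_smul, zero_sub, smul_neg, smul_smul, hc]
    simp
  have hnormμ : starRingEnd ℂ μ * μ = 1 := by
    have h := Complex.normSq_eq_conj_mul_self (z := μ)
    rw [← h, Complex.normSq_eq_norm_sq, habsμ]; norm_num
  refine ⟨μ, μ⁻¹ • X, habsμ, ?_, hAA, ?_, ?_⟩
  · rw [smul_smul, mul_inv_cancel₀ hμne, one_smul]
  · apply herm_of _ hAA
    rw [Matrix.conjTranspose_smul, smul_mul_assoc, mul_smul_comm, smul_smul, hXu]
    have hnormμ' : star μ * μ = 1 := hnormμ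
    rw [show μ⁻¹ * star μ⁻¹ = (star μ * μ)⁻¹ by rw [star_inv₀, mul_inv]; ring]
    rw [hnormμ', inv_one, one_smul]
  · rw [Matrix.trace_smul, htX, smul_zero]


-- commutant of an anticommuting pair is scalar
lemma commutant (A B C S : M2) (hSU : Sᴴ * S = 1) (hSU' : S * Sᴴ = 1)
    (hSz : S * Pz = A * S) (hSx : S * Px = B * S)
    (h1 : C * A = A * C) (h2 : C * B = B * C) : ∃ c : ℂ, C = c • 1 := by
  set D := Sᴴ * C * S with hD
  have hAS : Sᴴ * A = Pz * Sᴴ := by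
    calc Sᴴ * A = Sᴴ * A * (S * Sᴴ) := by rw [hSU', mul_one]
    _ = Sᴴ * (A * S) * Sᴴ := by noncomm_ring
    _ = Sᴴ * (S * Pz) * Sᴴ := by rw [hSz]
    _ = (Sᴴ * S) * Pz * Sᴴ := by noncomm_ring
    _ = Pz * Sᴴ := by rw [hSU, one_mul]
  have hBS : Sᴴ * B = Px * Sᴴ := by
    calc Sᴴ * B = Sᴴ * B * (S * Sᴴ) := by rw [hSU', mul_one]
    _ = Sᴴ * (B * S) * Sᴴ := by noncomm_ring
    _ = Sᴴ * (S * Px) * Sᴴ := by rw [hSx]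
    _ = (Sᴴ * S) * Px * Sᴴ := by noncomm_ring
    _ = Px * Sᴴ := by rw [hSU, one_mul]
  have hDz : D * Pz = Pz * D := by
    calc D * Pz = Sᴴ * C * (S * Pz) := by rw [hD]; noncomm_ring
    _ = Sᴴ * (C * A) * S := by rw [hSz]; noncomm_ring
    _ = Sᴴ * (A * C) * S := by rw [h1]
    _ = (Sᴴ * A) * C * S := by noncomm_ring
    _ = Pz * D := by rw [hAS, hD]; noncomm_ring
  have hDx : D * Px = Px * D := by
    calc D * Px = Sᴴ * C * (S * Px) := by rw [hD]; noncomm_ring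
    _ = Sᴴ * (C * B) * S := by rw [hSx]; noncomm_ring
    _ = Sᴴ * (B * C) * S := by rw [h2]
    _ = (Sᴴ * B) * C * S := by noncomm_ring
    _ = Px * D := by rw [hBS, hD]; noncomm_ring
  have hD01 : D 0 1 = 0 := by
    have := congrFun (congrFun hDz 0) 1
    simp [Matrix.mul_apply, Fin.sum_univ_two, Pz] at this
    linear_combination (-1/2 : ℂ) * this
  have hD10 : D 1 0 = 0 := by
    have := congrFun (congrFun hDz 1) 0
    simp [Matrix.mul_apply, Fin.sum_univ_two, Pz] at this
    linear_combination (1/2 : ℂ) * this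
  have hDdiag : D 0 0 = D 1 1 := by
    have := congrFun (congrFun hDx 0) 1
    simp [Matrix.mul_apply, Fin.sum_univ_two, Px] at this
    linear_combination this
  have hDscalar : D = (D 0 0) • 1 := by
    ext i j
    fin_cases i <;> fin_cases j <;> simp [Matrix.one_apply]
    · exact hD01
    · exact hD10
    · exact hDdiag.symm
  refine ⟨D 0 0, ?_⟩
  calc C = (S * Sᴴ) * C * (S * Sᴴ) := by rw [hSU']; noncomm_ring
  _ = S * D * Sᴴ := by rw [hD]; noncomm_ring
  _ = S * ((D 0 0) • 1) * Sᴴ := by rw [← hDscalar]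
  _ = (D 0 0) • (S * Sᴴ) := by rw [mul_smul_comm, mul_one, smul_mul_assoc]
  _ = (D 0 0) • 1 := by rw [hSU']

lemma family (X : Fin 4 → M2) (hX0 : X 0 = 1)
    (hXu : ∀ j, X j * (X j)ᴴ = 1)
    (hXo : ∀ j k, j ≠ k → ((X j)ᴴ * (X k)).trace = 0) :
    ∃ (S : M2) (μ₁ μ₂ μ₃ ε : ℂ), Sᴴ * S = 1 ∧ S * Sᴴ = 1 ∧
      ‖μ₁‖ = 1 ∧ ‖μ₂‖ = 1 ∧ ‖μ₃‖ = 1 ∧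
      (ε = 1 ∨ ε = -1) ∧
      X 1 = μ₁ • (S * Pz * Sᴴ) ∧ X 2 = μ₂ • (S * Px * Sᴴ) ∧
      X 3 = (μ₃ * ε) • (S * Py * Sᴴ) := by
  have htr : ∀ j : Fin 4, j ≠ 0 → (X j).trace = 0 := by
    intro j hj
    have := hXo 0 j (Ne.symm hj)
    rwa [hX0, Matrix.conjTranspose_one, one_mul] at this
  obtain ⟨μ₁, A₁, hab1, hX1, hA1sq, hA1h, hA1t⟩ :=
    unit_phase (X 1) (hXu 1) (htr 1 (by decide))
  obtain ⟨μ₂, A₂, hab2, hX2, hA2sq, hA2h, hA2t⟩ :=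
    unit_phase (X 2) (hXu 2) (htr 2 (by decide))
  obtain ⟨μ₃, A₃, hab3, hX3, hA3sq, hA3h, hA3t⟩ :=
    unit_phase (X 3) (hXu 3) (htr 3 (by decide))
  have hne1 : μ₁ ≠ 0 := by intro h; rw [h] at hab1; simp at hab1
  have hne2 : μ₂ ≠ 0 := by intro h; rw [h] at hab2; simp at hab2
  have hne3 : μ₃ ≠ 0 := by intro h; rw [h] at hab3; simp at hab3
  -- pairwise trace orthogonality of the A's
  have key : ∀ (j k : Fin 4) (μ ν : ℂ) (A B : M2), j ≠ k → μ ≠ 0 → ν ≠ 0 →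
      X j = μ • A → X k = ν • B → Aᴴ = A → (A * B).trace = 0 := by
    intro j k μ ν A B hjk hμ hν hXA hXB hAh
    have h := hXo j k hjk
    rw [hXA, hXB, Matrix.conjTranspose_smul, smul_mul_assoc, mul_smul_comm,
      Matrix.trace_smul, Matrix.trace_smul, hAh] at h
    have hcne : starRingEnd ℂ μ ≠ 0 := by simpa using hμ
    rw [smul_eq_mul, smul_eq_mul] at h
    rcases mul_eq_zero.mp h with h' | h'
    · exact absurd h' hcne
    · rcases mul_eq_zero.mp h' with h'' | h''
      · exact absurd h'' hν
      · exact h''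
  have t12 : (A₁ * A₂).trace = 0 := key 1 2 μ₁ μ₂ A₁ A₂ (by decide) hne1 hne2 hX1 hX2 hA1h
  have t13 : (A₁ * A₃).trace = 0 := key 1 3 μ₁ μ₃ A₁ A₃ (by decide) hne1 hne3 hX1 hX3 hA1h
  have t23 : (A₂ * A₃).trace = 0 := key 2 3 μ₂ μ₃ A₂ A₃ (by decide) hne2 hne3 hX2 hX3 hA2h
  have ac12 := anticomm A₁ A₂ hA1sq hA2sq hA1t hA2t t12
  have ac13 := anticomm A₁ A₃ hA1sq hA3sq hA1t hA3t t13
  have ac23 := anticomm A₂ A₃ hA2sq hA3sq hA2t hA3t t23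
  obtain ⟨S, hSU, hSz, hSx⟩ := conj_pair A₁ A₂ hA1sq hA2sq hA1h hA2h ac12 hA1t
  have hSU' : S * Sᴴ = 1 := mul_eq_one_comm.mp hSU
  -- Q = -i A₁ A₂ and the Py conjugation
  set Q : M2 := (-Complex.I) • (A₁ * A₂) with hQ
  have hPy : Py = (-Complex.I) • (Pz * Px) := by
    ext i j
    fin_cases i <;> fin_cases j <;>
      simp [Py, Pz, Px, Matrix.mul_apply, Fin.sum_univ_two]
  have hSPy : S * Py * Sᴴ = Q := by
    rw [hPy, hQ, mul_smul_comm, smul_mul_assoc]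
    congr 1
    calc S * (Pz * Px) * Sᴴ = (S * Pz) * Px * Sᴴ := by noncomm_ring
    _ = A₁ * (S * Px) * Sᴴ := by rw [hSz]; noncomm_ring
    _ = A₁ * A₂ * (S * Sᴴ) := by rw [hSx]; noncomm_ring
    _ = A₁ * A₂ := by rw [hSU', mul_one]
  -- A₃ = c • Q with c = ±1
  have hQQ : Q * Q = 1 := by
    rw [hQ, smul_mul_assoc, mul_smul_comm, smul_smul]
    have : A₁ * A₂ * (A₁ * A₂) = -(A₁ * A₁ * (A₂ * A₂)) := by
      have h21 : A₂ * A₁ = -(A₁ * A₂) := eq_neg_of_add_eq_zero_right ac12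
      calc A₁ * A₂ * (A₁ * A₂) = A₁ * (A₂ * A₁) * A₂ := by noncomm_ring
      _ = A₁ * (-(A₁ * A₂)) * A₂ := by rw [h21]
      _ = -(A₁ * A₁ * (A₂ * A₂)) := by noncomm_ring
    rw [this, hA1sq, hA2sq, mul_one]
    simp [Complex.I_mul_I]
  have h21 : A₂ * A₁ = -(A₁ * A₂) := eq_neg_of_add_eq_zero_right ac12
  have h31 : A₃ * A₁ = -(A₁ * A₃) := eq_neg_of_add_eq_zero_right ac13
  have h32 : A₃ * A₂ = -(A₂ * A₃) := eq_neg_of_add_eq_zero_right ac23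
  have hN1 : A₃ * (A₁ * A₂) * A₁ = A₁ * (A₃ * (A₁ * A₂)) := by
    have l : A₃ * (A₁ * A₂) * A₁ = -(A₃ * A₂) := by
      calc A₃ * (A₁ * A₂) * A₁ = (A₃ * A₁) * (A₂ * A₁) := by noncomm_ring
      _ = (-(A₁ * A₃)) * (-(A₁ * A₂)) := by rw [h31, h21]
      _ = A₁ * (A₃ * A₁) * A₂ := by noncomm_ring
      _ = A₁ * (-(A₁ * A₃)) * A₂ := by rw [h31]
      _ = -((A₁ * A₁) * (A₃ * A₂)) := by noncomm_ring
      _ = -(A₃ * A₂) := by rw [hA1sq, one_mul]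
    have r : A₁ * (A₃ * (A₁ * A₂)) = -(A₃ * A₂) := by
      calc A₁ * (A₃ * (A₁ * A₂)) = A₁ * (A₃ * A₁) * A₂ := by noncomm_ring
      _ = A₁ * (-(A₁ * A₃)) * A₂ := by rw [h31]
      _ = -((A₁ * A₁) * (A₃ * A₂)) := by noncomm_ring
      _ = -(A₃ * A₂) := by rw [hA1sq, one_mul]
    rw [l, r]
  have hN2 : A₃ * (A₁ * A₂) * A₂ = A₂ * (A₃ * (A₁ * A₂)) := by
    have l : A₃ * (A₁ * A₂) * A₂ = -(A₁ * A₃) := by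
      calc A₃ * (A₁ * A₂) * A₂ = (A₃ * A₁) * (A₂ * A₂) := by noncomm_ring
      _ = (A₃ * A₁) * 1 := by rw [hA2sq]
      _ = A₃ * A₁ := by rw [mul_one]
      _ = -(A₁ * A₃) := h31
    have r : A₂ * (A₃ * (A₁ * A₂)) = -(A₁ * A₃) := by
      calc A₂ * (A₃ * (A₁ * A₂)) = (A₂ * A₃) * A₁ * A₂ := by noncomm_ring
      _ = (-(A₃ * A₂)) * A₁ * A₂ := by
        rw [show A₂ * A₃ = -(A₃ * A₂) from eq_neg_of_add_eq_zero_left ac23]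
      _ = -(A₃ * (A₂ * A₁) * A₂) := by noncomm_ring
      _ = -(A₃ * (-(A₁ * A₂)) * A₂) := by rw [h21]
      _ = A₃ * A₁ * (A₂ * A₂) := by noncomm_ring
      _ = A₃ * A₁ * 1 := by rw [hA2sq]
      _ = A₃ * A₁ := by rw [mul_one]
      _ = -(A₁ * A₃) := h31
    rw [l, r]
  have hcomm1 : (A₃ * Q) * A₁ = A₁ * (A₃ * Q) := by
    rw [hQ, mul_smul_comm, smul_mul_assoc, mul_smul_comm, hN1]
  have hcomm2 : (A₃ * Q) * A₂ = A₂ * (A₃ * Q) := by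
    rw [hQ, mul_smul_comm, smul_mul_assoc, mul_smul_comm, hN2]
  obtain ⟨c, hc⟩ := commutant A₁ A₂ (A₃ * Q) S hSU hSU' hSz hSx hcomm1 hcomm2
  have hA₃Q : A₃ = c • Q := by
    calc A₃ = A₃ * (Q * Q) := by rw [hQQ, mul_one]
    _ = (A₃ * Q) * Q := by noncomm_ring
    _ = (c • 1) * Q := by rw [hc]
    _ = c • Q := by rw [smul_mul_assoc, one_mul]
  have hcc : c * c = 1 := by
    have h := hA3sq
    rw [hA₃Q, smul_mul_assoc, mul_smul_comm, smul_smul, hQQ] at h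
    have := congrFun (congrFun h 0) 0
    simpa [Matrix.one_apply] using this
  have hcpm : c = 1 ∨ c = -1 := mul_self_eq_one_iff.mp hcc
  have hA1S : A₁ = S * Pz * Sᴴ := by
    rw [hSz, mul_assoc, hSU', mul_one]
  have hA2S : A₂ = S * Px * Sᴴ := by
    rw [hSx, mul_assoc, hSU', mul_one]
  refine ⟨S, μ₁, μ₂, μ₃, c, hSU, hSU', hab1, hab2, hab3, hcpm, ?_, ?_, ?_⟩
  · rw [hX1, hA1S]
  · rw [hX2, hA2S]
  · rw [hX3, hA₃Q, hSPy, smul_smul]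


lemma sandwich (SA SB P : M2) (hB : SBᴴ * SB = 1) :
    (SA * SBᴴ) * (SB * P * SBᴴ) * (SA * SBᴴ)ᴴ = SA * P * SAᴴ := by
  rw [Matrix.conjTranspose_mul, Matrix.conjTranspose_conjTranspose]
  calc (SA * SBᴴ) * (SB * P * SBᴴ) * (SB * SAᴴ)
      = SA * ((SBᴴ * SB) * (P * (SBᴴ * SB))) * SAᴴ := by noncomm_ring
  _ = SA * P * SAᴴ := by rw [hB, one_mul, mul_one]

lemma kron_mulVec (U V : M2) (χ : Fin 2 × Fin 2 → ℂ) (a b : Fin 2) :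
    ((U ⊗ₖ V).mulVec χ) (a, b) =
      (U * (Matrix.of fun c d => χ (c, d)) * Vᵀ) a b := by
  rw [Matrix.mulVec, dotProduct, Fintype.sum_prod_type]
  simp only [Matrix.mul_apply, Matrix.kroneckerMap_apply, Matrix.transpose_apply,
    Matrix.of_apply, Fin.sum_univ_two]
  ring

-- reduced density matrix A as matrix product
lemma rdmA_eq (χ : Fin 2 × Fin 2 → ℂ) :
    rdmA χ = (Matrix.of fun a b => χ (a, b)) * (Matrix.of fun a b => χ (a, b))ᴴ := by
  ext a b
  simp [rdmA, Matrix.mul_apply, Matrix.conjTranspose_apply]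

lemma trace_inner (χ η : Fin 2 × Fin 2 → ℂ) :
    ((Matrix.of fun a b => χ (a, b))ᴴ * (Matrix.of fun a b => η (a, b))).trace =
      ∑ x : Fin 2 × Fin 2, starRingEnd ℂ (χ x) * η x := by
  rw [Fintype.sum_prod_type]
  simp only [Matrix.trace, Matrix.diag, Matrix.mul_apply, Matrix.conjTranspose_apply,
    Matrix.of_apply, Fin.sum_univ_two, Complex.star_def]
  ring

theorem maximally_entangled_bases_lu_equivalent
    (ψ φ : Fin 4 → (Fin 2 × Fin 2 → ℂ))
    (hψon : ∀ j k : Fin 4, ∑ x : Fin 2 × Fin 2, starRingEnd ℂ (ψ j x) * ψ k x =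
      if j = k then 1 else 0)
    (hφon : ∀ j k : Fin 4, ∑ x : Fin 2 × Fin 2, starRingEnd ℂ (φ j x) * φ k x =
      if j = k then 1 else 0)
    (hψme : ∀ j : Fin 4, rdmA (ψ j) = (1 / 2 : ℂ) • 1 ∧ rdmB (ψ j) = (1 / 2 : ℂ) • 1)
    (hφme : ∀ j : Fin 4, rdmA (φ j) = (1 / 2 : ℂ) • 1 ∧ rdmB (φ j) = (1 / 2 : ℂ) • 1) :
    ∃ (γ : Fin 4 → ℝ) (U₁ U₂ : Matrix (Fin 2) (Fin 2) ℂ),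
      U₁ ∈ Matrix.unitaryGroup (Fin 2) ℂ ∧ U₂ ∈ Matrix.unitaryGroup (Fin 2) ℂ ∧
      ∀ j : Fin 4, ψ j = fun x =>
        Complex.exp (Complex.I * (γ j)) * ((U₁ ⊗ₖ U₂).mulVec (φ j)) x := by
  set Mψ : Fin 4 → M2 := fun j => Matrix.of fun a b => ψ j (a, b) with hMψdef
  set Mφ : Fin 4 → M2 := fun j => Matrix.of fun a b => φ j (a, b) with hMφdef
  have hψA : ∀ j, Mψ j * (Mψ j)ᴴ = (1/2 : ℂ) • 1 := fun j => by
    show (Matrix.of fun a b => ψ j (a, b)) * (Matrix.of fun a b => ψ j (a, b))ᴴ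
      = (1/2 : ℂ) • 1
    rw [← rdmA_eq]; exact (hψme j).1
  have hφA : ∀ j, Mφ j * (Mφ j)ᴴ = (1/2 : ℂ) • 1 := fun j => by
    show (Matrix.of fun a b => φ j (a, b)) * (Matrix.of fun a b => φ j (a, b))ᴴ
      = (1/2 : ℂ) • 1
    rw [← rdmA_eq]; exact (hφme j).1
  have hψt : ∀ j k, ((Mψ j)ᴴ * Mψ k).trace = if j = k then 1 else 0 := fun j k => by
    show ((Matrix.of fun a b => ψ j (a, b))ᴴ * (Matrix.of fun a b => ψ k (a, b))).trace = _
    rw [trace_inner]; exact hψon j k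
  have hφt : ∀ j k, ((Mφ j)ᴴ * Mφ k).trace = if j = k then 1 else 0 := fun j k => by
    show ((Matrix.of fun a b => φ j (a, b))ᴴ * (Matrix.of fun a b => φ k (a, b))).trace = _
    rw [trace_inner]; exact hφon j k
  have inv2 : ∀ M : M2, M * Mᴴ = (1/2:ℂ) • 1 → M * ((2:ℂ) • Mᴴ) = 1 := by
    intro M h
    rw [mul_smul_comm, h, smul_smul]
    norm_num
  have hψ2 : ∀ j, Mψ j * ((2:ℂ) • (Mψ j)ᴴ) = 1 := fun j => inv2 _ (hψA j)
  have hφ2 : ∀ j, Mφ j * ((2:ℂ) • (Mφ j)ᴴ) = 1 := fun j => inv2 _ (hφA j)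
  have hψrev : ∀ j, ((2:ℂ) • (Mψ j)ᴴ) * Mψ j = 1 := fun j =>
    mul_eq_one_comm.mp (hψ2 j)
  have hφrev : ∀ j, ((2:ℂ) • (Mφ j)ᴴ) * Mφ j = 1 := fun j =>
    mul_eq_one_comm.mp (hφ2 j)
  set X : Fin 4 → M2 := fun j => (2:ℂ) • ((Mψ 0)ᴴ * Mψ j) with hXdef
  set Y : Fin 4 → M2 := fun j => (2:ℂ) • ((Mφ 0)ᴴ * Mφ j) with hYdef
  have hX0 : X 0 = 1 := by
    show (2:ℂ) • ((Mψ 0)ᴴ * Mψ 0) = 1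
    have := hψrev 0
    rwa [smul_mul_assoc] at this
  have hY0 : Y 0 = 1 := by
    show (2:ℂ) • ((Mφ 0)ᴴ * Mφ 0) = 1
    have := hφrev 0
    rwa [smul_mul_assoc] at this
  have hX0' : (2:ℂ) • ((Mψ 0)ᴴ * Mψ 0) = 1 := hX0
  have hY0' : (2:ℂ) • ((Mφ 0)ᴴ * Mφ 0) = 1 := hY0
  have hc2 : star (2:ℂ) = 2 := by
    rw [Complex.star_def, show (2:ℂ) = ((2:ℝ):ℂ) by norm_num, Complex.conj_ofReal]
  have hXu : ∀ j, X j * (X j)ᴴ = 1 := by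
    intro j
    show ((2:ℂ) • ((Mψ 0)ᴴ * Mψ j)) * ((2:ℂ) • ((Mψ 0)ᴴ * Mψ j))ᴴ = 1
    rw [Matrix.conjTranspose_smul, Matrix.conjTranspose_mul,
      Matrix.conjTranspose_conjTranspose, hc2]
    rw [smul_mul_assoc, mul_smul_comm, smul_smul]
    have hmid : ((Mψ 0)ᴴ * Mψ j) * ((Mψ j)ᴴ * Mψ 0) = (1/4:ℂ) • 1 := by
      calc ((Mψ 0)ᴴ * Mψ j) * ((Mψ j)ᴴ * Mψ 0)
          = (Mψ 0)ᴴ * (Mψ j * (Mψ j)ᴴ) * Mψ 0 := by noncomm_ring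
      _ = (Mψ 0)ᴴ * ((1/2:ℂ) • 1) * Mψ 0 := by rw [hψA j]
      _ = (1/2:ℂ) • ((Mψ 0)ᴴ * Mψ 0) := by
          rw [mul_smul_comm, smul_mul_assoc, mul_one]
      _ = (1/4:ℂ) • ((2:ℂ) • ((Mψ 0)ᴴ * Mψ 0)) := by
          rw [smul_smul]; norm_num
      _ = (1/4:ℂ) • 1 := by rw [hX0']
    rw [hmid, smul_smul]
    norm_num
  have hYu : ∀ j, Y j * (Y j)ᴴ = 1 := by
    intro j
    show ((2:ℂ) • ((Mφ 0)ᴴ * Mφ j)) * ((2:ℂ) • ((Mφ 0)ᴴ * Mφ j))ᴴ = 1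
    rw [Matrix.conjTranspose_smul, Matrix.conjTranspose_mul,
      Matrix.conjTranspose_conjTranspose, hc2]
    rw [smul_mul_assoc, mul_smul_comm, smul_smul]
    have hmid : ((Mφ 0)ᴴ * Mφ j) * ((Mφ j)ᴴ * Mφ 0) = (1/4:ℂ) • 1 := by
      calc ((Mφ 0)ᴴ * Mφ j) * ((Mφ j)ᴴ * Mφ 0)
          = (Mφ 0)ᴴ * (Mφ j * (Mφ j)ᴴ) * Mφ 0 := by noncomm_ring
      _ = (Mφ 0)ᴴ * ((1/2:ℂ) • 1) * Mφ 0 := by rw [hφA j]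
      _ = (1/2:ℂ) • ((Mφ 0)ᴴ * Mφ 0) := by
          rw [mul_smul_comm, smul_mul_assoc, mul_one]
      _ = (1/4:ℂ) • ((2:ℂ) • ((Mφ 0)ᴴ * Mφ 0)) := by
          rw [smul_smul]; norm_num
      _ = (1/4:ℂ) • 1 := by rw [hY0']
    rw [hmid, smul_smul]
    norm_num
  have hXo : ∀ j k, j ≠ k → ((X j)ᴴ * X k).trace = 0 := by
    intro j k hjk
    show (((2:ℂ) • ((Mψ 0)ᴴ * Mψ j))ᴴ * ((2:ℂ) • ((Mψ 0)ᴴ * Mψ k))).trace = 0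
    rw [Matrix.conjTranspose_smul, Matrix.conjTranspose_mul,
      Matrix.conjTranspose_conjTranspose, hc2]
    rw [smul_mul_assoc, mul_smul_comm, smul_smul]
    have hmid : ((Mψ j)ᴴ * Mψ 0) * ((Mψ 0)ᴴ * Mψ k) = (1/2:ℂ) • ((Mψ j)ᴴ * Mψ k) := by
      calc ((Mψ j)ᴴ * Mψ 0) * ((Mψ 0)ᴴ * Mψ k)
          = (Mψ j)ᴴ * (Mψ 0 * (Mψ 0)ᴴ) * Mψ k := by noncomm_ring
      _ = (Mψ j)ᴴ * ((1/2:ℂ) • 1) * Mψ k := by rw [hψA 0]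
      _ = (1/2:ℂ) • ((Mψ j)ᴴ * Mψ k) := by
          rw [mul_smul_comm, smul_mul_assoc, mul_one]
    rw [hmid, smul_smul, Matrix.trace_smul, hψt j k, if_neg hjk, smul_zero]
  have hYo : ∀ j k, j ≠ k → ((Y j)ᴴ * Y k).trace = 0 := by
    intro j k hjk
    show (((2:ℂ) • ((Mφ 0)ᴴ * Mφ j))ᴴ * ((2:ℂ) • ((Mφ 0)ᴴ * Mφ k))).trace = 0
    rw [Matrix.conjTranspose_smul, Matrix.conjTranspose_mul,
      Matrix.conjTranspose_conjTranspose, hc2]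
    rw [smul_mul_assoc, mul_smul_comm, smul_smul]
    have hmid : ((Mφ j)ᴴ * Mφ 0) * ((Mφ 0)ᴴ * Mφ k) = (1/2:ℂ) • ((Mφ j)ᴴ * Mφ k) := by
      calc ((Mφ j)ᴴ * Mφ 0) * ((Mφ 0)ᴴ * Mφ k)
          = (Mφ j)ᴴ * (Mφ 0 * (Mφ 0)ᴴ) * Mφ k := by noncomm_ring
      _ = (Mφ j)ᴴ * ((1/2:ℂ) • 1) * Mφ k := by rw [hφA 0]
      _ = (1/2:ℂ) • ((Mφ j)ᴴ * Mφ k) := by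
          rw [mul_smul_comm, smul_mul_assoc, mul_one]
    rw [hmid, smul_smul, Matrix.trace_smul, hφt j k, if_neg hjk, smul_zero]
  obtain ⟨SA, μ₁, μ₂, μ₃, c, hSAu, hSAu', hm1, hm2, hm3, hcpm, hX1, hX2, hX3⟩ :=
    family X hX0 hXu hXo
  obtain ⟨SB, ν₁, ν₂, ν₃, d, hSBu, hSBu', hn1, hn2, hn3, hdpm, hY1, hY2, hY3⟩ :=
    family Y hY0 hYu hYo
  have hn1ne : ν₁ ≠ 0 := by intro h; rw [h] at hn1; simp at hn1
  have hn2ne : ν₂ ≠ 0 := by intro h; rw [h] at hn2; simp at hn2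
  have hn3ne : ν₃ ≠ 0 := by intro h; rw [h] at hn3; simp at hn3
  have hdne : d ≠ 0 := by rcases hdpm with rfl | rfl <;> norm_num
  have habsd : ‖d‖ = 1 := by rcases hdpm with rfl | rfl <;> simp
  have habsc : ‖c‖ = 1 := by rcases hcpm with rfl | rfl <;> simp
  set S : M2 := SA * SBᴴ with hSdef
  have hSS : S * Sᴴ = 1 := by
    show (SA * SBᴴ) * (SA * SBᴴ)ᴴ = 1
    rw [Matrix.conjTranspose_mul, Matrix.conjTranspose_conjTranspose]
    calc SA * SBᴴ * (SB * SAᴴ) = SA * (SBᴴ * SB) * SAᴴ := by noncomm_ring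
    _ = SA * SAᴴ := by rw [hSBu, mul_one]
    _ = 1 := hSAu'
  have hSS' : Sᴴ * S = 1 := mul_eq_one_comm.mp hSS
  set Λ : Fin 4 → ℂ := ![1, μ₁ * ν₁⁻¹, μ₂ * ν₂⁻¹, (μ₃ * c) * (ν₃ * d)⁻¹] with hΛdef
  have habsΛ : ∀ j, ‖(Λ j)‖ = 1 := by
    intro j
    fin_cases j <;>
      simp [hΛdef, _root_.map_mul, map_inv₀, hm1, hm2, hm3, hn1, hn2, hn3, habsc, habsd]
  have hXY : ∀ j, X j = Λ j • (S * Y j * Sᴴ) := by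
    intro j
    fin_cases j
    · show X 0 = Λ 0 • (S * Y 0 * Sᴴ)
      rw [hX0, hY0, mul_one, hSS]
      simp [hΛdef]
    · show X 1 = Λ 1 • (S * Y 1 * Sᴴ)
      rw [hX1, hY1, mul_smul_comm, smul_mul_assoc, hSdef, sandwich SA SB Pz hSBu,
        smul_smul]
      congr 1
      show μ₁ = μ₁ * ν₁⁻¹ * ν₁
      field_simp
    · show X 2 = Λ 2 • (S * Y 2 * Sᴴ)
      rw [hX2, hY2, mul_smul_comm, smul_mul_assoc, hSdef, sandwich SA SB Px hSBu,
        smul_smul]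
      congr 1
      show μ₂ = μ₂ * ν₂⁻¹ * ν₂
      field_simp
    · show X 3 = Λ 3 • (S * Y 3 * Sᴴ)
      rw [hX3, hY3, mul_smul_comm, smul_mul_assoc, hSdef, sandwich SA SB Py hSBu,
        smul_smul]
      congr 1
      show μ₃ * c = μ₃ * c * (ν₃ * d)⁻¹ * (ν₃ * d)
      field_simp
  set U₁ : M2 := Mψ 0 * S * ((2:ℂ) • (Mφ 0)ᴴ) with hU₁def
  set U₂ : M2 := (Sᴴ)ᵀ with hU₂def
  have hU1 : U₁ * U₁ᴴ = 1 := by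
    show (Mψ 0 * S * ((2:ℂ) • (Mφ 0)ᴴ)) * (Mψ 0 * S * ((2:ℂ) • (Mφ 0)ᴴ))ᴴ = 1
    rw [Matrix.conjTranspose_mul, Matrix.conjTranspose_mul, Matrix.conjTranspose_smul,
      Matrix.conjTranspose_conjTranspose, hc2]
    have e1 : ((2:ℂ) • (Mφ 0)ᴴ) * ((2:ℂ) • Mφ 0) = (2:ℂ) • (1 : M2) := by
      rw [mul_smul_comm, hφrev 0]
    calc Mψ 0 * S * ((2:ℂ) • (Mφ 0)ᴴ) * ((2:ℂ) • Mφ 0 * (Sᴴ * (Mψ 0)ᴴ))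
        = Mψ 0 * S * (((2:ℂ) • (Mφ 0)ᴴ) * ((2:ℂ) • Mφ 0)) * Sᴴ * (Mψ 0)ᴴ := by
          noncomm_ring
    _ = Mψ 0 * S * ((2:ℂ) • (1:M2)) * Sᴴ * (Mψ 0)ᴴ := by rw [e1]
    _ = (2:ℂ) • (Mψ 0 * (S * Sᴴ) * (Mψ 0)ᴴ) := by
        simp only [smul_mul_assoc, mul_smul_comm]
        congr 1
        noncomm_ring
    _ = (2:ℂ) • (Mψ 0 * (Mψ 0)ᴴ) := by rw [hSS, mul_one]
    _ = 1 := by rw [hψA 0, smul_smul]; norm_num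
  have hU2 : U₂ * U₂ᴴ = 1 := by
    show (Sᴴ)ᵀ * ((Sᴴ)ᵀ)ᴴ = 1
    have htc : ((Sᴴ)ᵀ)ᴴ = Sᵀ := by
      ext i j
      simp [Matrix.conjTranspose_apply, Matrix.transpose_apply]
    rw [htc, ← Matrix.transpose_mul, hSS]
    exact Matrix.transpose_one
  have hMX : ∀ j, Mψ 0 * X j = Mψ j := by
    intro j
    show Mψ 0 * ((2:ℂ) • ((Mψ 0)ᴴ * Mψ j)) = Mψ j
    rw [mul_smul_comm, ← mul_assoc, hψA 0, smul_mul_assoc, one_mul, smul_smul]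
    norm_num
  have hMY : ∀ j, Mφ 0 * Y j = Mφ j := by
    intro j
    show Mφ 0 * ((2:ℂ) • ((Mφ 0)ᴴ * Mφ j)) = Mφ j
    rw [mul_smul_comm, ← mul_assoc, hφA 0, smul_mul_assoc, one_mul, smul_smul]
    norm_num
  have hUY : ∀ j, U₁ * Mφ j * U₂ᵀ = Mψ 0 * (S * Y j * Sᴴ) := by
    intro j
    show (Mψ 0 * S * ((2:ℂ) • (Mφ 0)ᴴ)) * Mφ j * ((Sᴴ)ᵀ)ᵀ
      = Mψ 0 * (S * ((2:ℂ) • ((Mφ 0)ᴴ * Mφ j)) * Sᴴ)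
    rw [Matrix.transpose_transpose]
    simp only [smul_mul_assoc, mul_smul_comm]
    congr 1
    noncomm_ring
  have hMat : ∀ j, Mψ j = Λ j • (U₁ * Mφ j * U₂ᵀ) := by
    intro j
    calc Mψ j = Mψ 0 * X j := (hMX j).symm
    _ = Mψ 0 * (Λ j • (S * Y j * Sᴴ)) := by rw [← hXY j]
    _ = Λ j • (Mψ 0 * (S * Y j * Sᴴ)) := by rw [mul_smul_comm]
    _ = Λ j • (U₁ * Mφ j * U₂ᵀ) := by rw [hUY j]
  refine ⟨fun j => (Λ j).arg, U₁, U₂, ?_, ?_, ?_⟩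
  · exact Matrix.mem_unitaryGroup_iff.mpr (by rw [Matrix.star_eq_conjTranspose]; exact hU1)
  · exact Matrix.mem_unitaryGroup_iff.mpr (by rw [Matrix.star_eq_conjTranspose]; exact hU2)
  · intro j
    funext x
    obtain ⟨a, b⟩ := x
    rw [kron_mulVec U₁ U₂ (φ j) a b]
    have hexp : Complex.exp (Complex.I * ((Λ j).arg : ℝ)) = Λ j := by
      rw [mul_comm]
      have h := Complex.norm_mul_exp_arg_mul_I (Λ j)
      rw [habsΛ j] at h
      simpa using h
    rw [hexp]
    have h := congrFun (congrFun (hMat j) a) b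
    exact h
end

section
/- For every 2×2 complex matrix M with trace zero there exists a 2×2 unitary matrix W such that both diagonal entries of W M W† vanish, i.e. W M W† is an off-diagonal (hollow) matrix. -/
open Complex Matrix

set_option maxHeartbeats 1000000 in
theorem traceless_unitarily_hollow (M : Matrix (Fin 2) (Fin 2) ℂ)
    (hM : M.trace = 0) :
    ∃ W : Matrix (Fin 2) (Fin 2) ℂ, W ∈ Matrix.unitaryGroup (Fin 2) ℂ ∧
      (W * M * Wᴴ) 0 0 = 0 ∧ (W * M * Wᴴ) 1 1 = 0 := by
  set a := M 0 0 with ha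
  set b := M 0 1 with hb
  set c := M 1 0 with hc
  have hd : M 1 1 = -a := by
    have h : M 0 0 + M 1 1 = 0 := by simpa [Matrix.trace, Fin.sum_univ_two] using hM
    linear_combination h
  by_cases h0 : a = 0
  · refine ⟨1, one_mem _, ?_, ?_⟩
    · simp [Matrix.conjTranspose_one, ← ha, h0]
    · simp [Matrix.conjTranspose_one, hd, h0]
  · set δ : ℂ := (starRingEnd ℂ) a * c - a * (starRingEnd ℂ) b with hδdef
    set w : ℂ := if δ = 0 then 1 else (starRingEnd ℂ) δ / ((‖δ‖ : ℝ) : ℂ) with hwdef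
    have hw1 : w * (starRingEnd ℂ) w = 1 := by
      by_cases hδ : δ = 0
      · simp [hwdef, hδ]
      · have habs : ((‖δ‖ : ℝ) : ℂ) ≠ 0 := by
          simpa using (norm_ne_zero_iff.mpr hδ)
        rw [hwdef, if_neg hδ]
        field_simp
        rw [map_div₀, Complex.conj_conj, Complex.conj_ofReal, mul_div_assoc',
          mul_comm ((starRingEnd ℂ) δ) δ, Complex.mul_conj, Complex.normSq_eq_norm_sq,
          div_eq_iff habs]
        push_cast
        ring
    have hδw : δ * w = (starRingEnd ℂ) (δ * w) := by
      by_cases hδ : δ = 0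
      · simp [hδ]
      · have h1 : δ * w = ((Complex.normSq δ / ‖δ‖ : ℝ) : ℂ) := by
          rw [hwdef, if_neg hδ]
          push_cast
          rw [mul_div_assoc', Complex.mul_conj]
        rw [h1, Complex.conj_ofReal]
    set u : ℂ := b * (starRingEnd ℂ) w + c * w with hudef
    have hcu : (starRingEnd ℂ) a * u = (starRingEnd ℂ) ((starRingEnd ℂ) a * u) := by
      have expand : (starRingEnd ℂ) a * u - (starRingEnd ℂ) ((starRingEnd ℂ) a * u)
          = δ * w - (starRingEnd ℂ) (δ * w) := by
        simp only [hudef, hδdef, _root_.map_mul, map_add, map_sub, Complex.conj_conj]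
        ring
      have hz : (starRingEnd ℂ) a * u - (starRingEnd ℂ) ((starRingEnd ℂ) a * u) = 0 := by
        rw [expand, ← hδw]; ring
      linear_combination hz
    have hre : (((starRingEnd ℂ) a * u).re : ℂ) = (starRingEnd ℂ) a * u :=
      Complex.conj_eq_iff_re.mp hcu.symm
    obtain ⟨x, hx⟩ : ∃ x : ℝ, (x : ℂ) = (starRingEnd ℂ) a * u := ⟨_, hre⟩
    set k : ℝ := x / Complex.normSq a with hkdef
    have hnsq : (Complex.normSq a : ℂ) ≠ 0 := by simpa using h0
    have hu : u = a * (k : ℂ) := by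
      rw [hkdef]
      push_cast
      rw [hx]
      field_simp
      linear_combination (-u) * (Complex.mul_conj a)
    set r : ℝ := (-k + Real.sqrt (k ^ 2 + 4)) / 2 with hrdef
    have hsq : Real.sqrt (k ^ 2 + 4) ^ 2 = k ^ 2 + 4 := Real.sq_sqrt (by positivity)
    have hrR : r ^ 2 + k * r - 1 = 0 := by
      rw [hrdef]; field_simp; nlinarith [hsq]
    have hr : (r : ℂ) ^ 2 + (k : ℂ) * (r : ℂ) - 1 = 0 := by exact_mod_cast hrR
    set n : ℝ := Real.sqrt (r ^ 2 + 1) with hndef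
    have hn2 : n ^ 2 = r ^ 2 + 1 := Real.sq_sqrt (by positivity)
    have hn0 : n ≠ 0 := by
      have : (0 : ℝ) < n := Real.sqrt_pos.mpr (by positivity)
      linarith
    have hn0c : (n : ℂ) ≠ 0 := by exact_mod_cast hn0
    have hn2c : (n : ℂ) ^ 2 = (r : ℂ) ^ 2 + 1 := by exact_mod_cast hn2
    set W : Matrix (Fin 2) (Fin 2) ℂ :=
      ((n : ℂ))⁻¹ • !![(r : ℂ), w; -(starRingEnd ℂ) w, (r : ℂ)] with hWdef
    have hWu : W ∈ Matrix.unitaryGroup (Fin 2) ℂ := by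
      rw [Matrix.mem_unitaryGroup_iff]
      ext i j
      fin_cases i <;> fin_cases j
      · simp [hWdef, Matrix.mul_apply, Fin.sum_univ_two, Matrix.star_eq_conjTranspose,
          Matrix.conjTranspose_apply, Matrix.one_apply]
        field_simp
        linear_combination hw1 - hn2c
      · simp [hWdef, Matrix.mul_apply, Fin.sum_univ_two, Matrix.star_eq_conjTranspose,
          Matrix.conjTranspose_apply, Matrix.one_apply]
        field_simp
        ring
      · simp [hWdef, Matrix.mul_apply, Fin.sum_univ_two, Matrix.star_eq_conjTranspose,
          Matrix.conjTranspose_apply, Matrix.one_apply]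
        field_simp
        ring
      · simp [hWdef, Matrix.mul_apply, Fin.sum_univ_two, Matrix.star_eq_conjTranspose,
          Matrix.conjTranspose_apply, Matrix.one_apply]
        field_simp
        linear_combination hw1 - hn2c
    have huM : M 0 1 * (starRingEnd ℂ) w + M 1 0 * w = M 0 0 * (k : ℂ) := by
      rw [← ha, ← hb, ← hc]; rw [hudef] at hu; exact hu
    have hdM : M 1 1 = -M 0 0 := by rw [← ha]; exact hd
    refine ⟨W, hWu, ?_, ?_⟩
    · show (W * M * Wᴴ) 0 0 = 0
      simp only [hWdef, Matrix.mul_apply, Fin.sum_univ_two, Matrix.conjTranspose_apply,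
        Matrix.smul_apply, Matrix.cons_val', Matrix.cons_val_zero, Matrix.cons_val_one,
        Matrix.head_cons, Matrix.head_fin_const, Matrix.empty_val', Matrix.cons_val_fin_one,
        smul_eq_mul, star_mul', star_inv₀, Matrix.of_apply]
      rw [hdM]
      simp only [Complex.star_def, Complex.conj_ofReal, Complex.conj_conj]
      field_simp
      linear_combination (r : ℂ) * huM + (M 0 0) * hr - (M 0 0) * hw1
    · show (W * M * Wᴴ) 1 1 = 0
      simp only [hWdef, Matrix.mul_apply, Fin.sum_univ_two, Matrix.conjTranspose_apply,
        Matrix.smul_apply, Matrix.cons_val', Matrix.cons_val_zero, Matrix.cons_val_one,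
        Matrix.head_cons, Matrix.head_fin_const, Matrix.empty_val', Matrix.cons_val_fin_one,
        smul_eq_mul, star_mul', star_inv₀, Matrix.of_apply]
      rw [hdM]
      simp only [Complex.star_def, Complex.conj_ofReal, Complex.conj_conj, map_neg]
      field_simp
      linear_combination -((r : ℂ) * huM + M 0 0 * hr - M 0 0 * hw1)
end

section
/- Let U₁, U₂ be 2×2 complex unitary matrices and let Ψ⁻ = (|01⟩ − |10⟩)/√2 ∈ ℂ²⊗ℂ². Then there exists c ∈ ℂ with (U₁ ⊗ U₂) Ψ⁻ = c · Ψ⁻ if and only if there exists z ∈ ℂ with |z| = 1 such that U₂ = z · U₁. -/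
open Complex Matrix Kronecker

/-- Bell state `Ψ⁻ = (|01⟩ − |10⟩)/√2`. -/
noncomputable def PsiM : Fin 2 × Fin 2 → ℂ := fun x =>
  ((if x = (0, 1) then 1 else 0) - (if x = (1, 0) then 1 else 0)) / Real.sqrt 2

theorem singlet_eigenvector_iff_proportional_unitaries
    (U₁ U₂ : Matrix (Fin 2) (Fin 2) ℂ)
    (hU₁ : U₁ ∈ Matrix.unitaryGroup (Fin 2) ℂ)
    (hU₂ : U₂ ∈ Matrix.unitaryGroup (Fin 2) ℂ) :
    (∃ c : ℂ, (U₁ ⊗ₖ U₂).mulVec PsiM = c • PsiM) ↔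
    (∃ z : ℂ, ‖z‖ = 1 ∧ U₂ = z • U₁) := by
  have hs : (Real.sqrt 2 : ℂ) ≠ 0 := by
    simp [Complex.ext_iff]
  have habs : ∀ M : Matrix (Fin 2) (Fin 2) ℂ, M ∈ Matrix.unitaryGroup (Fin 2) ℂ →
      ‖M.det‖ = 1 := by
    intro M hM
    have h := (Matrix.det_of_mem_unitary hM).1
    rw [Complex.star_def, ← Complex.normSq_eq_conj_mul_self] at h
    have h2 : Complex.normSq M.det = 1 := by exact_mod_cast h
    simp [Complex.norm_def, h2]
  have hdet1 : U₁.det ≠ 0 := by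
    intro h
    have := habs U₁ hU₁
    rw [h] at this; simp at this
  rw [Matrix.det_fin_two] at hdet1
  constructor
  · rintro ⟨c, hc⟩
    have e00 := congrFun hc (0,0)
    have e01 := congrFun hc (0,1)
    have e10 := congrFun hc (1,0)
    have e11 := congrFun hc (1,1)
    simp only [Matrix.mulVec, dotProduct, kroneckerMap_apply, Fintype.sum_prod_type,
      Fin.sum_univ_two, PsiM, Pi.smul_apply, smul_eq_mul] at e00 e01 e10 e11
    norm_num [Prod.ext_iff] at e00 e01 e10 e11
    field_simp at e00 e01 e10 e11
    set d := U₁ 0 0 * U₁ 1 1 - U₁ 0 1 * U₁ 1 0 with hd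
    have hM : U₂ = (c / d) • U₁ := by
      ext i j
      fin_cases i <;> fin_cases j <;>
        simp only [Matrix.smul_apply, smul_eq_mul] <;>
        rw [div_mul_eq_mul_div, eq_div_iff hdet1] <;>
        simp only [Fin.mk_zero, Fin.mk_one]
      · linear_combination U₁ 1 0 * e00 - U₁ 0 0 * e10
      · linear_combination U₁ 1 1 * e00 - U₁ 0 1 * e10
      · linear_combination U₁ 1 0 * e01 - U₁ 0 0 * e11
      · linear_combination U₁ 1 1 * e01 - U₁ 0 1 * e11
    refine ⟨c / d, ?_, hM⟩
    have h2 := habs U₂ hU₂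
    rw [hM, Matrix.det_smul] at h2
    simp only [smul_eq_mul, norm_mul, norm_pow, habs U₁ hU₁, mul_one,
      Fintype.card_fin] at h2
    nlinarith [norm_nonneg (c / d), h2, sq_nonneg (‖c / d‖ - 1), sq_nonneg (‖c / d‖ + 1)]
  · rintro ⟨z, hz, rfl⟩
    refine ⟨z * (U₁ 0 0 * U₁ 1 1 - U₁ 0 1 * U₁ 1 0), ?_⟩
    funext x
    obtain ⟨i, j⟩ := x
    fin_cases i <;> fin_cases j <;>
      simp only [Matrix.mulVec, dotProduct, kroneckerMap_apply, Fintype.sum_prod_type,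
        Fin.sum_univ_two, PsiM, Pi.smul_apply, smul_eq_mul, Matrix.smul_apply] <;>
      norm_num [Prod.ext_iff] <;> field_simp <;> ring
end
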